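/- arXiv:2212.04707 — 2 statements merged into one kernel-verified Lean document; each statement's English description precedes it below -/
import Mathlib

section
/- Let ξ₁,…,ξ_K be i.i.d. uniform on [0,D] (D > 0) and let M̄ be a positive integer, d > 0, λ > 0, u ∈ ℝ with (π D/λ)·u ≠ 0 and sin((π d/λ)·u) ≠ 0. Define G = (1/(K·M̄))·Σ_{k=1}^{K} Σ_{m=1}^{M̄} exp(i·(2π/λ)·(ξ_k + (m−1)d)·u). Then |E[G]| = |sin(M̄φ)/(M̄ sin φ)| · |sin(ρ)/ρ| where φ = (π d/λ)·u and ρ = (π D/λ)·u. -/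
open MeasureTheory ProbabilityTheory

/-- The uniform probability measure on the interval `[0, D]`. -/
noncomputable def uniformIcc (D : ℝ) : Measure ℝ :=
  (ENNReal.ofReal D)⁻¹ • (volume.restrict (Set.Icc 0 D))

/-!
Writing `c = 2πu/λ`, every term of `G` is `e^{icξ_k} · (e^{2iφ})^m`, so `G` is the product of
`(1/M) Σ_m (e^{2iφ})^m` and `(1/K) Σ_k e^{icξ_k}`. The first factor is a geometric sum of modulus
`|sin Mφ / (M sin φ)|`. By linearity of expectation, the second has expectation the
characteristic function of the uniform law on `[0, D]` at `c`, of modulus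
`|sinc (cD/2)| = |sin ρ / ρ|`.
-/

open Complex

lemma norm_exp_I_mul_ofReal_sub_one_eq_two_mul_abs_sin (x : ℝ) :
    ‖exp (I * x) - 1‖ = 2 * |Real.sin (x / 2)| := by
  rw [norm_exp_I_mul_ofReal_sub_one, norm_mul, Real.norm_eq_abs]
  norm_num

lemma norm_geom_sum_exp_I_mul (φ : ℝ) (hφ : Real.sin φ ≠ 0) (M : ℕ) :
    ‖∑ m ∈ Finset.range M, exp (I * ↑(2 * φ)) ^ m‖ = |Real.sin (M * φ) / Real.sin φ| := by
  have hpow : exp (I * ↑(2 * φ)) ^ M = exp (I * ↑(2 * (M * φ))) := by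
    rw [← exp_nat_mul]; congr 1; push_cast; ring
  have hne : exp (I * ↑(2 * φ)) ≠ 1 := by
    intro h
    have := norm_exp_I_mul_ofReal_sub_one_eq_two_mul_abs_sin (2 * φ)
    rw [h, sub_self, norm_zero, mul_div_cancel_left₀ φ two_ne_zero] at this
    exact hφ (abs_eq_zero.mp (by linarith [abs_nonneg (Real.sin φ)]))
  rw [geom_sum_eq hne, norm_div, hpow, norm_exp_I_mul_ofReal_sub_one_eq_two_mul_abs_sin,
    norm_exp_I_mul_ofReal_sub_one_eq_two_mul_abs_sin, mul_div_cancel_left₀ _ two_ne_zero,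
    mul_div_cancel_left₀ _ two_ne_zero, abs_div]
  have : |Real.sin φ| ≠ 0 := abs_ne_zero.mpr hφ
  field_simp

lemma isProbabilityMeasure_uniformIcc {D : ℝ} (hD : 0 < D) :
    IsProbabilityMeasure (uniformIcc D) := by
  constructor
  simp [uniformIcc, ENNReal.inv_mul_cancel, hD]

lemma charFun_uniformIcc {D t : ℝ} (hD : 0 < D) (ht : t ≠ 0) :
    charFun (uniformIcc D) t = (exp (I * ↑(t * D)) - 1) / (I * ↑(t * D)) := by
  have htI : (t : ℂ) * I ≠ 0 := mul_ne_zero (ofReal_ne_zero.mpr ht) I_ne_zero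
  simp_rw [charFun_apply_real, mul_right_comm (t : ℂ) _ I]
  rw [uniformIcc, integral_smul_measure, integral_Icc_eq_integral_Ioc,
    ← intervalIntegral.integral_of_le hD.le, integral_exp_mul_complex htI,
    ENNReal.toReal_inv, ENNReal.toReal_ofReal hD.le, Complex.real_smul]
  have hD0 : (D : ℂ) ≠ 0 := ofReal_ne_zero.mpr hD.ne'
  push_cast
  rw [mul_zero, exp_zero]
  field_simp

lemma norm_charFun_uniformIcc {D : ℝ} (hD : 0 < D) (t : ℝ) :
    ‖charFun (uniformIcc D) t‖ = |Real.sinc (t * D / 2)| := by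
  have := isProbabilityMeasure_uniformIcc hD
  rcases eq_or_ne t 0 with rfl | ht
  · simp
  have htD : t * D / 2 ≠ 0 := by positivity
  rw [charFun_uniformIcc hD ht, norm_div, norm_exp_I_mul_ofReal_sub_one_eq_two_mul_abs_sin,
    Real.sinc_of_ne_zero htD, norm_mul, norm_I, one_mul, norm_real, Real.norm_eq_abs, abs_div,
    abs_div]
  have : |t * D| ≠ 0 := by positivity
  field_simp
  ring

lemma integral_finsetSum_comp_of_map_eq {Ω α E : Type*} [MeasurableSpace Ω] [MeasurableSpace α]
    [NormedAddCommGroup E] [NormedSpace ℝ E] {P : Measure Ω} {μ : Measure α} {ι : Type*}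
    (s : Finset ι) {X : ι → Ω → α} (hX : ∀ i, AEMeasurable (X i) P) (hlaw : ∀ i, P.map (X i) = μ)
    {f : α → E} (hf : Integrable f μ) :
    ∫ ω, ∑ i ∈ s, f (X i ω) ∂P = s.card • ∫ x, f x ∂μ := by
  have hfi : ∀ i, Integrable (fun ω => f (X i ω)) P := fun i =>
    ((hlaw i).symm ▸ hf).comp_aemeasurable (hX i)
  rw [integral_finsetSum s fun i _ => hfi i, ← Finset.sum_const]
  refine Finset.sum_congr rfl fun i _ => ?_
  rw [← hlaw i, integral_map (hX i) ((hlaw i).symm ▸ hf.aestronglyMeasurable)]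

theorem abs_expectation_corr_coeff_general
    {Ω : Type*} [MeasurableSpace Ω] (P : Measure Ω) [IsProbabilityMeasure P]
    (K M : ℕ) (hK : 0 < K)
    (D lam d u : ℝ) (hD : 0 < D)
    (hρ : Real.pi * D / lam * u ≠ 0)
    (hφ : Real.sin (Real.pi * d / lam * u) ≠ 0)
    (ξ : Fin K → Ω → ℝ) (hmeas : ∀ k, Measurable (ξ k))
    (hlaw : ∀ k, Measure.map (ξ k) P = uniformIcc D) :
    ‖(∫ ω, (1 / ((K : ℂ) * (M : ℂ))) *
        ∑ k : Fin K, ∑ m ∈ Finset.range M,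
          Complex.exp (Complex.I * ((2 * Real.pi / lam * (ξ k ω + (m : ℝ) * d) * u : ℝ) : ℂ)) ∂P)‖
      = |Real.sin ((M : ℝ) * (Real.pi * d / lam * u)) / ((M : ℝ) * Real.sin (Real.pi * d / lam * u))|
        * |Real.sin (Real.pi * D / lam * u) / (Real.pi * D / lam * u)| := by
  set φ := Real.pi * d / lam * u
  set ρ := Real.pi * D / lam * u
  set c := 2 * Real.pi / lam * u
  have := isProbabilityMeasure_uniformIcc hD
  have hfactor : ∀ ω, (1 / ((K : ℂ) * (M : ℂ))) *
      ∑ k : Fin K, ∑ m ∈ Finset.range M,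
        exp (I * ((2 * Real.pi / lam * (ξ k ω + (m : ℝ) * d) * u : ℝ) : ℂ))
      = (1 / ((K : ℂ) * (M : ℂ))) * (∑ m ∈ Finset.range M, exp (I * ↑(2 * φ)) ^ m) *
        ∑ k : Fin K, exp (c * ξ k ω * I) := by
    have hterm : ∀ (x : ℝ) (m : ℕ),
        exp (I * ((2 * Real.pi / lam * (x + (m : ℝ) * d) * u : ℝ) : ℂ))
          = exp (I * ↑(2 * φ)) ^ m * exp (c * x * I) := by
      intro x m
      rw [← exp_nat_mul, ← exp_add]
      congr 1
      push_cast [φ, c]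
      ring
    intro ω
    simp only [hterm, ← Finset.sum_mul, ← Finset.mul_sum]
    ring
  have hint : Integrable (fun x : ℝ => exp (c * x * I)) (uniformIcc D) :=
    (integrable_const (1 : ℝ)).mono' (by fun_prop) (ae_of_all _ fun x => by
      simpa using (norm_exp_ofReal_mul_I (c * x)).le)
  rw [integral_congr_ae (ae_of_all _ hfactor), integral_const_mul,
    integral_finsetSum_comp_of_map_eq _ (fun k => (hmeas k).aemeasurable) hlaw hint,
    ← charFun_apply_real, nsmul_eq_mul, norm_mul, norm_mul, norm_mul, norm_geom_sum_exp_I_mul φ hφ,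
    norm_charFun_uniformIcc hD, show c * D / 2 = ρ by ring, Real.sinc_of_ne_zero hρ]
  have hK0 : (K : ℝ) ≠ 0 := by positivity
  simp only [Finset.card_univ, Fintype.card_fin, norm_div, norm_one, norm_mul, norm_natCast,
    abs_div, abs_mul, Nat.abs_cast]
  field_simp

/-- Proposition 3 (first part): for i.i.d. subarray positions uniform on `[0,D]`, the expected
angular correlation coefficient `G = (1/(K·M̄))·Σ_{k,m} exp(i·(2π/λ)(ξ_k+(m−1)d)·u)` satisfies
`|E[G]| = |sin(M̄φ)/(M̄ sin φ)| · |sin ρ/ρ|` with `φ = (π d/λ)u`, `ρ = (π D/λ)u`. -/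
theorem abs_expectation_corr_coeff
    {Ω : Type*} [MeasurableSpace Ω] (P : Measure Ω) [IsProbabilityMeasure P]
    (K M : ℕ) (hK : 0 < K) (hM : 0 < M)
    (D lam d u : ℝ) (hD : 0 < D) (hlam : 0 < lam) (hd : 0 < d)
    (hρ : Real.pi * D / lam * u ≠ 0)
    (hφ : Real.sin (Real.pi * d / lam * u) ≠ 0)
    (ξ : Fin K → Ω → ℝ) (hmeas : ∀ k, Measurable (ξ k))
    (hindep : iIndepFun ξ P)
    (hlaw : ∀ k, Measure.map (ξ k) P = uniformIcc D) :
    ‖(∫ ω, (1 / ((K : ℂ) * (M : ℂ))) *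
        ∑ k : Fin K, ∑ m ∈ Finset.range M,
          Complex.exp (Complex.I * ((2 * Real.pi / lam * (ξ k ω + (m : ℝ) * d) * u : ℝ) : ℂ)) ∂P)‖
      = |Real.sin ((M : ℝ) * (Real.pi * d / lam * u)) / ((M : ℝ) * Real.sin (Real.pi * d / lam * u))|
        * |Real.sin (Real.pi * D / lam * u) / (Real.pi * D / lam * u)| :=
  abs_expectation_corr_coeff_general P K M hK D lam d u hD hρ hφ ξ hmeas hlaw
end

section
/- Let s̄₁,…,s̄_L ∈ ℂ^K satisfy |[s̄_l]_k| = |s_l| for all k (constant modulus per row), and define the sample cumulant Cum(a,b,c,d) = (1/K)·(a⊙b)ᵀ(c⊙d) − (1/K²)·(aᵀb·cᵀd + aᵀc·bᵀd + aᵀd·bᵀc). Then for indices r,p,q, with R_{i,j} = (1/K)·s̄_jᴴ s̄_i and R̃_{i,j} = (1/K)·s̄_jᵀ s̄_i, one has Cum(s̄_r, conj(s̄_r), s̄_p, conj(s̄_q)) = −R̃_{r,p}·conj(R̃_{r,q}) − R_{r,q}·R_{p,r}. -/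
open Complex

/-- The sample fourth-order cross-cumulant used in the JADE algorithm. -/
noncomputable def sampleCum {K : ℕ} (a b c d : Fin K → ℂ) : ℂ :=
  (1 / (K : ℂ)) * ∑ k : Fin K, (a k * b k) * (c k * d k)
    - (1 / (K : ℂ) ^ 2) *
        ((∑ k : Fin K, a k * b k) * (∑ k : Fin K, c k * d k)
          + (∑ k : Fin K, a k * c k) * (∑ k : Fin K, b k * d k)
          + (∑ k : Fin K, a k * d k) * (∑ k : Fin K, b k * c k))

/-- Sample covariance entry `R_{i,j} = (1/K)·s̄_jᴴ s̄_i`. -/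
noncomputable def sampleR {K L : ℕ} (sb : Fin L → Fin K → ℂ) (i j : Fin L) : ℂ :=
  (1 / (K : ℂ)) * ∑ k : Fin K, (starRingEnd ℂ) (sb j k) * sb i k

/-- Pseudo-covariance entry `R̃_{i,j} = (1/K)·s̄_jᵀ s̄_i`. -/
noncomputable def sampleRt {K L : ℕ} (sb : Fin L → Fin K → ℂ) (i j : Fin L) : ℂ :=
  (1 / (K : ℂ)) * ∑ k : Fin K, sb j k * sb i k

/- If `a ⊙ b` is the constant `μ`, the fourth moment is `μ` times the mean of `c ⊙ d`, which
cancels the pairing `(aᵀb)(cᵀd)`; only the two cross pairings survive. -/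
theorem sampleCum_eq_of_mul_eq_const {K : ℕ} (a b c d : Fin K → ℂ) (μ : ℂ)
    (hab : ∀ k, a k * b k = μ) :
    sampleCum a b c d = -(1 / (K : ℂ) ^ 2) *
      ((∑ k, a k * c k) * (∑ k, b k * d k) + (∑ k, a k * d k) * (∑ k, b k * c k)) := by
  have hsum : ∑ k, (a k * b k) * (c k * d k) = μ * ∑ k, c k * d k := by
    simp only [hab, Finset.mul_sum]
  have hdiag : ∑ k, a k * b k = K * μ := by simp [hab]
  rw [sampleCum, hsum, hdiag]
  rcases eq_or_ne (K : ℂ) 0 with hK | hK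
  · simp [hK]
  · field_simp
    ring

theorem mul_conj_eq_of_norm_eq {z : ℂ} {ρ : ℝ} (h : ‖z‖ = ρ) :
    z * (starRingEnd ℂ) z = (ρ ^ 2 : ℝ) := by
  rw [Complex.mul_conj, ← Complex.sq_norm, h]

theorem jade_cumulant_constant_modulus_general
    (K L : ℕ) (sb : Fin L → Fin K → ℂ) (m : Fin L → ℝ)
    (hcm : ∀ l k, ‖sb l k‖ = m l) (r p q : Fin L) :
    sampleCum (sb r) (fun k => (starRingEnd ℂ) (sb r k)) (sb p)
        (fun k => (starRingEnd ℂ) (sb q k))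
      = -(sampleRt sb r p * (starRingEnd ℂ) (sampleRt sb r q))
        - sampleR sb r q * sampleR sb p r := by
  rw [sampleCum_eq_of_mul_eq_const _ _ _ _ _ fun k => mul_conj_eq_of_norm_eq (hcm r k)]
  simp only [sampleRt, sampleR, map_mul, map_sum, map_div₀, map_one, map_natCast]
  simp only [mul_comm (sb p _), mul_comm ((starRingEnd ℂ) (sb q _))]
  ring

/-- Simplification of the JADE cumulant under the constant-modulus structure
(Equation (16) of the paper). -/
theorem jade_cumulant_constant_modulus
    (K L : ℕ) (hK : 0 < K) (sb : Fin L → Fin K → ℂ) (m : Fin L → ℝ)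
    (hcm : ∀ l k, ‖sb l k‖ = m l) (r p q : Fin L) :
    sampleCum (sb r) (fun k => (starRingEnd ℂ) (sb r k)) (sb p)
        (fun k => (starRingEnd ℂ) (sb q k))
      = -(sampleRt sb r p * (starRingEnd ℂ) (sampleRt sb r q))
        - sampleR sb r q * sampleR sb p r :=
  jade_cumulant_constant_modulus_general K L sb m hcm r p q
end
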